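/- arXiv:2311.06589 — 2 statements merged into one kernel-verified Lean document; each statement's English description precedes it below -/
import Mathlib

section
/- For any Schwartz function f, ∫_ℝ (D^α f_x)(x) f(x) dx = 0. -/
open MeasureTheory Real Complex FourierTransform

/-- For a Schwartz function `f`, `∫ (D^α f_x) f = 0`, where `D^α` is the fractional
Laplacian defined via the Fourier multiplier `|ξ|^α`. -/
theorem integral_fractional_laplacian_deriv_self
    (α : ℝ) (hα : 1 ≤ α) (hα' : α < 2)
    (f : SchwartzMap ℝ ℂ) (Dfx : ℝ → ℂ)
    (hDfx : ∀ ξ : ℝ, FourierTransform.fourier Dfx ξ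
      = ((|ξ| ^ α : ℝ) : ℂ) * FourierTransform.fourier (deriv (⇑f)) ξ)
    (hDfxi : Integrable Dfx) :
    ∫ x : ℝ, Dfx x * f x = 0 := by
  -- let `g` be the inverse Fourier transform of `f`, a Schwartz function
  set g : SchwartzMap ℝ ℂ := (SchwartzMap.fourierTransformCLE ℂ (SchwartzMap ℝ ℂ)).symm f with hgdef
  have hFg : 𝓕 ⇑g = ⇑f := by
    have h1 : (SchwartzMap.fourierTransformCLE ℂ (SchwartzMap ℝ ℂ)) g = f :=
      (SchwartzMap.fourierTransformCLE ℂ (SchwartzMap ℝ ℂ)).apply_symm_apply f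
    rw [← h1]
    exact (SchwartzMap.fourier_coe g).symm
  have hg_eq : ∀ ξ : ℝ, g ξ = 𝓕 ⇑f (-ξ) := by
    intro ξ
    have : ⇑g = 𝓕⁻ ⇑f := by
      rw [hgdef]; exact SchwartzMap.fourierInv_coe f
    rw [this]
    exact Real.fourierInv_eq_fourier_neg (⇑f) ξ
  -- flip the Fourier transform
  have hflip : (innerₗ ℝ).flip = innerₗ ℝ := by
    apply LinearMap.ext; intro x
    apply LinearMap.ext; intro y
    simp [real_inner_comm]
  have key : ∫ ξ : ℝ, (𝓕 Dfx) ξ • g ξ = ∫ x : ℝ, Dfx x • (𝓕 ⇑g) x := by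
    have := VectorFourier.integral_fourierIntegral_smul_eq_flip (μ := volume) (ν := volume) (L := innerₗ ℝ)
      Real.continuous_fourierChar continuous_inner hDfxi g.integrable
    rw [hflip] at this
    exact this
  have hstep : ∫ x : ℝ, Dfx x * f x = ∫ ξ : ℝ, (𝓕 Dfx) ξ * g ξ := by
    rw [← hFg]
    simpa [smul_eq_mul] using key.symm
  rw [hstep]
  -- compute the Fourier transform of the derivative
  have hderiv : 𝓕 (deriv (⇑f)) = fun ξ : ℝ ↦ (2 * π * I * ξ) • (𝓕 ⇑f ξ) :=
    Real.fourier_deriv f.integrable f.differentiable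
      (SchwartzMap.derivCLM ℝ ℂ f).integrable
  have heq : ∀ ξ : ℝ, (𝓕 Dfx) ξ * g ξ
      = ((|ξ| ^ α : ℝ) : ℂ) * ((2 * π * I * ξ) * 𝓕 ⇑f ξ) * 𝓕 ⇑f (-ξ) := by
    intro ξ
    rw [hDfx ξ, hg_eq ξ, hderiv]
    simp [smul_eq_mul]
  simp_rw [heq]
  -- the integrand is odd, so the integral vanishes
  set h : ℝ → ℂ := fun ξ ↦ ((|ξ| ^ α : ℝ) : ℂ) * ((2 * π * I * ξ) * 𝓕 ⇑f ξ) * 𝓕 ⇑f (-ξ)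
    with hh
  have hodd : ∀ ξ : ℝ, h (-ξ) = - h ξ := by
    intro ξ
    simp only [hh, abs_neg, neg_neg, Complex.ofReal_neg]
    push_cast
    ring
  have hneg : ∫ ξ : ℝ, h (-ξ) = ∫ ξ : ℝ, h ξ := integral_neg_eq_self h volume
  have hint : ∫ ξ : ℝ, h (-ξ) = - ∫ ξ : ℝ, h ξ := by
    simp_rw [hodd]
    exact integral_neg h
  have h2 : (2 : ℂ) * ∫ ξ : ℝ, h ξ = 0 := by
    linear_combination (hneg.symm.trans hint)
  exact (mul_eq_zero.mp h2).resolve_left two_ne_zero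
end

section
/- Discrete comparison with a convex ODE: let f : ℝ → ℝ be locally Lipschitz, increasing and convex on [0,∞), K ≥ 1, and let y solve y' = f(((K²+1)/2) y), y(0) = a₀ ≥ 0 on [0, T]. Suppose the nonnegative sequence (a_n) satisfies a₀ = y(0), and for each n with t_{n+1} = (n+1)Δt ≤ T: a_{n+1} ≤ a_n + Δt f((a_n + a_{n+1})/2) together with a_{n+1} ≤ K² a_n. Then a_n ≤ y(t_n) for all n with t_n ≤ T. -/
open Set intervalIntegral

-- slope sign lemmas
lemma slope_nonpos_of {y : ℝ → ℝ} {d u w : ℝ} (huw : u < w) (hd : HasDerivAt y d u)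
    (h : ∀ t ∈ Set.Ioc u w, y t ≤ y u) : d ≤ 0 := by
  have hs : Filter.Tendsto (slope y u) (nhdsWithin u (Set.Ioi u)) (nhds d) :=
    (hasDerivAt_iff_tendsto_slope.mp hd).mono_left
      (nhdsWithin_mono u (fun x hx => ne_of_gt hx))
  refine le_of_tendsto hs ?_
  filter_upwards [Ioc_mem_nhdsGT huw] with t ht
  rw [slope_def_field]
  have h1 : y t - y u ≤ 0 := sub_nonpos.mpr (h t ht)
  have h2 : 0 < t - u := sub_pos.mpr ht.1
  exact div_nonpos_of_nonpos_of_nonneg h1 h2.le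

lemma slope_nonneg_of {y : ℝ → ℝ} {d u w : ℝ} (huw : u < w) (hd : HasDerivAt y d u)
    (h : ∀ t ∈ Set.Ioc u w, y u ≤ y t) : 0 ≤ d := by
  have := slope_nonpos_of (y := fun t => -y t) huw hd.neg (fun t ht => neg_le_neg (h t ht))
  linarith

lemma cont_clamp {y : ℝ → ℝ} {s e : ℝ} (hse : s ≤ e)
    (hy : ∀ t ∈ Icc s e, ContinuousAt y t) :
    Continuous (fun t => y (max s (min t e))) := by
  rw [continuous_iff_continuousAt]
  intro x
  have hmem : max s (min x e) ∈ Icc s e :=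
    ⟨le_max_left _ _, max_le hse (min_le_right _ _)⟩
  have hc : Continuous (fun t : ℝ => max s (min t e)) :=
    continuous_const.max (continuous_id.min continuous_const)
  exact ContinuousAt.comp (hy _ hmem) hc.continuousAt

lemma isClosed_cross_le {y : ℝ → ℝ} {s e b : ℝ} (hse : s ≤ e)
    (hy : ∀ t ∈ Icc s e, ContinuousAt y t) :
    IsClosed {t | t ∈ Icc s e ∧ y t ≤ b} := by
  have : {t | t ∈ Icc s e ∧ y t ≤ b}
      = Icc s e ∩ (fun t => y (max s (min t e))) ⁻¹' Iic b := by
    ext t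
    simp only [mem_setOf_eq, mem_inter_iff, mem_preimage, mem_Iic]
    constructor
    · rintro ⟨ht, h⟩
      refine ⟨ht, ?_⟩
      rw [min_eq_left ht.2, max_eq_right ht.1]; exact h
    · rintro ⟨ht, h⟩
      refine ⟨ht, ?_⟩
      rwa [min_eq_left ht.2, max_eq_right ht.1] at h
  rw [this]
  exact isClosed_Icc.inter (IsClosed.preimage (cont_clamp hse hy) isClosed_Iic)

lemma isClosed_cross_ge {y : ℝ → ℝ} {s e b : ℝ} (hse : s ≤ e)
    (hy : ∀ t ∈ Icc s e, ContinuousAt y t) :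
    IsClosed {t | t ∈ Icc s e ∧ b ≤ y t} := by
  have := isClosed_cross_le (y := fun t => -y t) (b := -b) hse (fun t ht => (hy t ht).neg)
  convert this using 1
  ext t; simp [neg_le_neg_iff]

lemma last_ge {y : ℝ → ℝ} {s e aa : ℝ} (hse : s ≤ e)
    (hy : ∀ t ∈ Icc s e, ContinuousAt y t) (hs : aa ≤ y s) (he : y e < aa) :
    ∃ τ, τ ∈ Ico s e ∧ y τ = aa ∧ ∀ t ∈ Ioc τ e, y t < aa := by
  set S : Set ℝ := {t | t ∈ Icc s e ∧ aa ≤ y t} with hS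
  have hclosed : IsClosed S := isClosed_cross_ge hse hy
  have hne : S.Nonempty := ⟨s, ⟨le_refl _, hse⟩, hs⟩
  have hbdd : BddAbove S := ⟨e, fun t ht => ht.1.2⟩
  set τ := sSup S with hτ
  have hτS : τ ∈ S := hclosed.csSup_mem hne hbdd
  have hτe : τ ≠ e := fun h => absurd hτS.2 (by rw [h]; exact not_le.mpr he)
  have hτIco : τ ∈ Ico s e := ⟨hτS.1.1, lt_of_le_of_ne hτS.1.2 hτe⟩
  have hlt : ∀ t ∈ Ioc τ e, y t < aa := by
    intro t ht
    by_contra hge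
    push_neg at hge
    have : t ∈ S := ⟨⟨hτIco.1.trans ht.1.le, ht.2⟩, hge⟩
    exact absurd (le_csSup hbdd this) (not_le.mpr ht.1)
  refine ⟨τ, hτIco, ?_, hlt⟩
  by_contra hne'
  have hgt : aa < y τ := lt_of_le_of_ne hτS.2 (Ne.symm hne')
  have hev : ∀ᶠ t in nhdsWithin τ (Ioi τ), aa < y t ∧ t ∈ Ioc τ e := by
    refine Filter.Eventually.and ?_ (Ioc_mem_nhdsGT hτIco.2)
    exact Filter.Eventually.filter_mono nhdsWithin_le_nhds
      ((hy τ hτS.1).eventually (eventually_gt_nhds hgt))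
  obtain ⟨t, ht1, ht2⟩ := hev.exists
  exact absurd (hlt t ht2) (not_lt.mpr ht1.le)

lemma first_le {y : ℝ → ℝ} {s e bb : ℝ} (hse : s ≤ e)
    (hy : ∀ t ∈ Icc s e, ContinuousAt y t) (hs : bb < y s) (he : y e ≤ bb) :
    ∃ τ, τ ∈ Ioc s e ∧ y τ = bb ∧ ∀ t ∈ Ico s τ, bb < y t := by
  set S : Set ℝ := {t | t ∈ Icc s e ∧ y t ≤ bb} with hS
  have hclosed : IsClosed S := isClosed_cross_le hse hy
  have hne : S.Nonempty := ⟨e, ⟨hse, le_refl _⟩, he⟩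
  have hbdd : BddBelow S := ⟨s, fun t ht => ht.1.1⟩
  set τ := sInf S with hτ
  have hτS : τ ∈ S := hclosed.csInf_mem hne hbdd
  have hτs : τ ≠ s := fun h => absurd hτS.2 (by rw [h]; exact not_le.mpr hs)
  have hτIoc : τ ∈ Ioc s e := ⟨lt_of_le_of_ne hτS.1.1 (Ne.symm hτs), hτS.1.2⟩
  have hgt : ∀ t ∈ Ico s τ, bb < y t := by
    intro t ht
    by_contra hge
    push_neg at hge
    have : t ∈ S := ⟨⟨ht.1, ht.2.le.trans hτS.1.2⟩, hge⟩
    exact absurd (csInf_le hbdd this) (not_le.mpr ht.2)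
  refine ⟨τ, hτIoc, ?_, hgt⟩
  by_contra hne'
  have hlt' : y τ < bb := lt_of_le_of_ne hτS.2 hne'
  have hev : ∀ᶠ t in nhdsWithin τ (Iio τ), y t < bb ∧ t ∈ Ico s τ := by
    refine Filter.Eventually.and ?_ (Ico_mem_nhdsLT hτIoc.1)
    exact Filter.Eventually.filter_mono nhdsWithin_le_nhds
      ((hy τ hτS.1).eventually (eventually_lt_nhds hlt'))
  obtain ⟨t, ht1, ht2⟩ := hev.exists
  exact absurd (hgt t ht2) (not_lt.mpr ht1.le)

lemma hermite_hadamard_aux {h : ℝ → ℝ} {b a : ℝ} (hba : b ≤ a)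
    (hconv : ConvexOn ℝ (Icc b a) h) (hcont : ContinuousOn h (Icc b a)) :
    (a - b) * h ((a + b) / 2) ≤ ∫ v in b..a, h v := by
  set m := (a + b) / 2 with hm
  have hbm : b ≤ m := by rw [hm]; linarith
  have hma : m ≤ a := by rw [hm]; linarith
  have hint1 : IntervalIntegrable h MeasureTheory.volume b m :=
    (hcont.mono (by rw [uIcc_of_le hbm]; exact Icc_subset_Icc le_rfl hma)).intervalIntegrable
  have hint2 : IntervalIntegrable h MeasureTheory.volume m a :=
    (hcont.mono (by rw [uIcc_of_le hma]; exact Icc_subset_Icc hbm le_rfl)).intervalIntegrable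
  have hsplit : (∫ v in b..a, h v) = (∫ v in b..m, h v) + ∫ v in m..a, h v :=
    (integral_add_adjacent_intervals hint1 hint2).symm
  have hrefl : (∫ v in b..m, h v) = ∫ u in m..a, h (a + b - u) := by
    rw [intervalIntegral.integral_comp_sub_left h (a + b),
      show a + b - a = b from by ring, show a + b - m = m from by rw [hm]; ring]
  have hmaps : ∀ u ∈ Icc m a, a + b - u ∈ Icc b m := by
    intro u hu
    constructor <;> [linarith [hu.2]; linarith [hu.1]]
  have hcont2 : ContinuousOn (fun u => h (a + b - u) + h u) (Icc m a) := by
    apply ContinuousOn.add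
    · apply (hcont.mono (Icc_subset_Icc le_rfl hma)).comp
        (Continuous.continuousOn (by continuity))
      intro u hu
      exact hmaps u hu
    · exact hcont.mono (Icc_subset_Icc hbm le_rfl)
  have hptwise : ∀ u ∈ Icc m a, 2 * h m ≤ h (a + b - u) + h u := by
    intro u hu
    have hu1 : a + b - u ∈ Icc b a := ⟨(hmaps u hu).1, (hmaps u hu).2.trans hma⟩
    have hu2 : u ∈ Icc b a := ⟨hbm.trans hu.1, hu.2⟩
    have := hconv.2 hu1 hu2 (by norm_num : (0:ℝ) ≤ 1/2) (by norm_num : (0:ℝ) ≤ 1/2)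
      (by norm_num)
    have heq : (1/2 : ℝ) • (a + b - u) + (1/2 : ℝ) • u = m := by
      simp only [smul_eq_mul]; rw [hm]; ring
    rw [heq] at this
    simp only [smul_eq_mul] at this
    linarith
  have hmono : (∫ u in m..a, (2 * h m)) ≤ ∫ u in m..a, (h (a + b - u) + h u) := by
    apply integral_mono_on hma (intervalIntegrable_const)
      ((hcont2.mono (by rw [uIcc_of_le hma])).intervalIntegrable) hptwise
  rw [integral_const] at hmono
  have hadd : (∫ u in m..a, (h (a + b - u) + h u)) = (∫ v in b..m, h v) + ∫ v in m..a, h v := by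
    rw [integral_add, hrefl]
    · apply ContinuousOn.intervalIntegrable
      rw [uIcc_of_le hma]
      exact fun u hu => ((hcont.mono (Icc_subset_Icc le_rfl hma)).comp
        (Continuous.continuousOn (by continuity)) (fun u hu => hmaps u hu)) u hu
    · exact hint2
  rw [hadd] at hmono
  rw [hsplit]
  have : (a - m) • (2 * h m) = (a - b) * h m := by
    rw [smul_eq_mul, hm]; ring
  linarith [this ▸ hmono]

lemma convexOn_inv_neg {f : ℝ → ℝ} {c b a : ℝ} (hb : 0 ≤ b) (hc : 0 < c)
    (hfconv : ConvexOn ℝ (Ici (0:ℝ)) f)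
    (hneg : ∀ v ∈ Icc b a, f (c * v) < 0) :
    ConvexOn ℝ (Icc b a) (fun v => (-(f (c * v)))⁻¹) := by
  refine ⟨convex_Icc _ _, ?_⟩
  intro x hx y hy α β hα hβ hαβ
  simp only [smul_eq_mul]
  set z := α * x + β * y with hz
  have hzmem : z ∈ Icc b a := by
    have := (convex_Icc b a) hx hy hα hβ hαβ
    simpa [smul_eq_mul] using this
  set p := -(f (c * x)) with hp
  set q := -(f (c * y)) with hq
  set r := -(f (c * z)) with hr
  have hp0 : 0 < p := by rw [hp]; linarith [hneg x hx]
  have hq0 : 0 < q := by rw [hq]; linarith [hneg y hy]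
  have hr0 : 0 < r := by rw [hr]; linarith [hneg z hzmem]
  have hconc : α * p + β * q ≤ r := by
    have hx0 : (0:ℝ) ≤ c * x := mul_nonneg hc.le (hb.trans hx.1)
    have hy0 : (0:ℝ) ≤ c * y := mul_nonneg hc.le (hb.trans hy.1)
    have := hfconv.2 (mem_Ici.mpr hx0) (mem_Ici.mpr hy0) hα hβ hαβ
    simp only [smul_eq_mul] at this
    have heq : α * (c * x) + β * (c * y) = c * z := by rw [hz]; ring
    rw [heq] at this
    rw [hp, hq, hr]; linarith
  have hsum0 : 0 < α * p + β * q := by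
    have hmin : min p q ≤ p := min_le_left _ _
    have hmin' : min p q ≤ q := min_le_right _ _
    have h1 : α * min p q ≤ α * p := mul_le_mul_of_nonneg_left hmin hα
    have h2 : β * min p q ≤ β * q := mul_le_mul_of_nonneg_left hmin' hβ
    have h3 : 0 < min p q := lt_min hp0 hq0
    nlinarith
  have h1 : r⁻¹ ≤ (α * p + β * q)⁻¹ := by
    apply inv_anti₀ hsum0 hconc
  have h2 : (α * p + β * q)⁻¹ ≤ α * p⁻¹ + β * q⁻¹ := by
    rw [inv_eq_one_div, div_le_iff₀ hsum0]
    have e1 : p * p⁻¹ = 1 := mul_inv_cancel₀ hp0.ne'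
    have e2 : q * q⁻¹ = 1 := mul_inv_cancel₀ hq0.ne'
    have e3 : 0 ≤ p * q⁻¹ + q * p⁻¹ - 2 := by
      have : p * q⁻¹ + q * p⁻¹ - 2 = (p - q)^2 * (p⁻¹ * q⁻¹) := by
        field_simp
        ring
      rw [this]
      positivity
    have expand : (α * p⁻¹ + β * q⁻¹) * (α * p + β * q)
        = α^2 * (p*p⁻¹) + β^2*(q*q⁻¹) + α*β*(p*q⁻¹ + q*p⁻¹) := by ring
    rw [expand, e1, e2]
    have hαβ2 : 2 * (α*β) ≤ α*β*(p*q⁻¹ + q*p⁻¹) := by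
      have := mul_le_mul_of_nonneg_left (by linarith : (2:ℝ) ≤ p*q⁻¹ + q*p⁻¹)
        (mul_nonneg hα hβ)
      linarith
    nlinarith [sq_nonneg (α + β)]
  linarith

lemma step_decreasing
    {f : ℝ → ℝ} {c : ℝ} (hc : 1 ≤ c)
    (hfmono : MonotoneOn f (Ici (0:ℝ))) (hfconv : ConvexOn ℝ (Ici (0:ℝ)) f)
    (hfcont : Continuous f)
    {y : ℝ → ℝ} {s Δt : ℝ} (hΔt : 0 < Δt)
    (hyd : ∀ t ∈ Icc s (s + Δt), HasDerivAt y (f (c * y t)) t)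
    {a b : ℝ} (hb0 : 0 ≤ b) (hba : b < a)
    (hstep : b ≤ a + Δt * f ((a + b) / 2))
    (hya : a ≤ y s)
    (hneg : ∀ v ∈ Icc b a, f (c * v) < 0) :
    b ≤ y (s + Δt) := by
  by_contra hcon
  push_neg at hcon
  set e := s + Δt with he
  have hse : s ≤ e := by rw [he]; linarith
  have hcont : ∀ t ∈ Icc s e, ContinuousAt y t := fun t ht => (hyd t ht).continuousAt
  obtain ⟨τa, hτaI, hyτa, hlta⟩ := last_ge hse hcont hya (hcon.trans hba)
  have hsubI : Icc τa e ⊆ Icc s e := Icc_subset_Icc hτaI.1 le_rfl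
  obtain ⟨τb, hτbI, hyτb, hgtb⟩ := first_le hτaI.2.le (fun t ht => hcont t (hsubI ht))
    (by rw [hyτa]; exact hba) hcon.le
  have hτab : τa < τb := hτbI.1
  have hτbe : τb < e := by
    rcases lt_or_eq_of_le hτbI.2 with h | h
    · exact h
    · exfalso; rw [h] at hyτb; rw [hyτb] at hcon; exact lt_irrefl _ hcon
  have hrange : ∀ t ∈ Icc τa τb, y t ∈ Icc b a := by
    intro t ht
    constructor
    · rcases lt_or_eq_of_le ht.2 with h | h
      · exact (hgtb t ⟨ht.1, h⟩).le
      · rw [h, hyτb]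
    · rcases eq_or_lt_of_le ht.1 with h | h
      · rw [← h, hyτa]
      · exact (hlta t ⟨h, ht.2.trans hτbe.le⟩).le
  set hfun : ℝ → ℝ := fun v => (-(f (c * v)))⁻¹ with hhfun
  have hc0 : (0:ℝ) < c := lt_of_lt_of_le one_pos hc
  have hhc : ContinuousOn hfun (Icc b a) := by
    apply ContinuousOn.inv₀
    · exact ((hfcont.comp (continuous_const.mul continuous_id)).neg).continuousOn
    · intro v hv
      exact ne_of_gt (neg_pos.mpr (hneg v hv))
  have hIccsub : Icc τa τb ⊆ Icc s e := Icc_subset_Icc hτaI.1 hτbe.le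
  have huIcc : uIcc τa τb = Icc τa τb := uIcc_of_le hτab.le
  have hI : (∫ t in τa..τb, f (c * y t) • hfun (y t)) = ∫ v in y τa..y τb, hfun v := by
    apply integral_comp_smul_deriv' (f := y) (f' := fun t => f (c * y t)) (g := hfun)
    · intro x hx
      exact hyd x (hIccsub (huIcc ▸ hx))
    · rw [huIcc]
      exact hfcont.comp_continuousOn (continuousOn_const.mul
        (fun t ht => (hcont t (hIccsub ht)).continuousWithinAt))
    · rw [huIcc]
      apply hhc.mono
      intro v hv
      obtain ⟨t, ht, rfl⟩ := hv
      exact hrange t ht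
  have hLHS : (∫ t in τa..τb, f (c * y t) • hfun (y t)) = -(τb - τa) := by
    have hcongr : EqOn (fun t => f (c * y t) • hfun (y t)) (fun _ => (-1 : ℝ)) (uIcc τa τb) := by
      intro t ht
      have hyt := hrange t (huIcc ▸ ht)
      have hne : f (c * y t) < 0 := hneg _ hyt
      simp only [hhfun, smul_eq_mul]
      rw [mul_inv_eq_iff_eq_mul₀ (by exact neg_ne_zero.mpr hne.ne)]
      ring
    rw [integral_congr hcongr, integral_const]
    simp
  have hRHS : (∫ v in y τa..y τb, hfun v) = -∫ v in b..a, hfun v := by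
    rw [hyτa, hyτb, integral_symm]
  have htime : τb - τa = ∫ v in b..a, hfun v := by
    have := hI
    rw [hLHS, hRHS] at this
    linarith
  -- Hermite-Hadamard lower bound
  have hHH := hermite_hadamard_aux hba.le (convexOn_inv_neg hb0 hc0 hfconv hneg) hhc
  set m := (a + b) / 2 with hm
  have hmI : m ∈ Icc b a := ⟨by rw [hm]; linarith, by rw [hm]; linarith⟩
  have hm0 : 0 ≤ m := hb0.trans hmI.1
  have hfm_le : f m ≤ f (c * m) :=
    hfmono (mem_Ici.mpr hm0) (mem_Ici.mpr (mul_nonneg hc0.le hm0))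
      (le_mul_of_one_le_left hm0 hc)
  have hfcm : f (c * m) < 0 := hneg m hmI
  have hfm : f m < 0 := lt_of_le_of_lt hfm_le hfcm
  have hinv : (-(f m))⁻¹ ≤ hfun m := by
    simp only [hhfun]
    exact inv_anti₀ (neg_pos.mpr hfcm) (by linarith)
  have hab : Δt * (-(f m)) ≤ a - b := by
    simp only [hm] at hstep ⊢
    linarith
  have hΔle : Δt ≤ τb - τa := by
    have h1 : Δt = (Δt * (-(f m))) * (-(f m))⁻¹ := by
      rw [mul_assoc, mul_inv_cancel₀ (neg_ne_zero.mpr hfm.ne), mul_one]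
    have h2 : (Δt * (-(f m))) * (-(f m))⁻¹ ≤ (a - b) * (-(f m))⁻¹ :=
      mul_le_mul_of_nonneg_right hab (inv_nonneg.mpr (by linarith))
    have h3 : (a - b) * (-(f m))⁻¹ ≤ (a - b) * hfun m :=
      mul_le_mul_of_nonneg_left hinv (by linarith)
    rw [htime]
    calc Δt = (Δt * (-(f m))) * (-(f m))⁻¹ := h1
    _ ≤ (a - b) * (-(f m))⁻¹ := h2
    _ ≤ (a - b) * hfun m := h3
    _ ≤ ∫ v in b..a, hfun v := hHH
  have : τb - τa < Δt := by
    have := hτaI.1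
    rw [he] at hτbe
    linarith
  linarith

lemma global_le {f y : ℝ → ℝ} {c A T : ℝ}
    (hyd : ∀ t ∈ Icc (0:ℝ) T, HasDerivAt y (f (c * y t)) t)
    (hy0 : y 0 = A) (hfA : f (c * A) < 0) :
    ∀ t ∈ Icc (0:ℝ) T, y t ≤ A := by
  intro t₂ ht₂
  by_contra hcon
  push_neg at hcon
  have hcont : ∀ t ∈ Icc (0:ℝ) t₂, ContinuousAt y t :=
    fun t ht => (hyd t ⟨ht.1, ht.2.trans ht₂.2⟩).continuousAt
  obtain ⟨τ, hτI, hyτ, hlt⟩ := last_ge (y := fun t => -y t) (aa := -A) ht₂.1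
    (fun t ht => (hcont t ht).neg) (by simp [hy0]) (by simpa using hcon)
  have hyτ' : y τ = A := by have := hyτ; simp at this; linarith
  have hτT : τ ∈ Icc (0:ℝ) T := ⟨hτI.1, hτI.2.le.trans ht₂.2⟩
  have h0 : 0 ≤ f (c * y τ) := by
    apply slope_nonneg_of hτI.2 (hyd τ hτT)
    intro t ht
    have := hlt t ht
    simp at this
    rw [hyτ']
    linarith
  rw [hyτ'] at h0
  linarith

-- If f (c A) > 0 then y stays ≥ A
lemma global_ge {f y : ℝ → ℝ} {c A T : ℝ}
    (hyd : ∀ t ∈ Icc (0:ℝ) T, HasDerivAt y (f (c * y t)) t)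
    (hy0 : y 0 = A) (hfA : 0 < f (c * A)) :
    ∀ t ∈ Icc (0:ℝ) T, A ≤ y t := by
  intro t₂ ht₂
  by_contra hcon
  push_neg at hcon
  have hcont : ∀ t ∈ Icc (0:ℝ) t₂, ContinuousAt y t :=
    fun t ht => (hyd t ⟨ht.1, ht.2.trans ht₂.2⟩).continuousAt
  obtain ⟨τ, hτI, hyτ, hlt⟩ := last_ge (aa := A) ht₂.1 hcont (le_of_eq hy0.symm) hcon
  have hτT : τ ∈ Icc (0:ℝ) T := ⟨hτI.1, hτI.2.le.trans ht₂.2⟩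
  have h0 : f (c * y τ) ≤ 0 := by
    apply slope_nonpos_of hτI.2 (hyd τ hτT)
    intro t ht
    rw [hyτ]
    exact (hlt t ht).le
  rw [hyτ] at h0
  linarith

-- If f (c A) = 0 then y ≡ A
lemma global_eq {f y : ℝ → ℝ} {c A T : ℝ} (hc : 0 < c)
    (hfLip : LocallyLipschitz f)
    (hyd : ∀ t ∈ Icc (0:ℝ) T, HasDerivAt y (f (c * y t)) t)
    (hy0 : y 0 = A) (hfA : f (c * A) = 0) (hT : 0 ≤ T) :
    ∀ t ∈ Icc (0:ℝ) T, y t = A := by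
  obtain ⟨L, U, hU, hLip⟩ := hfLip (c * A)
  obtain ⟨ε, hε, hball⟩ := Metric.mem_nhds_iff.mp hU
  set S := {t | t ∈ Icc (0:ℝ) T ∧ ∀ u ∈ Icc (0:ℝ) t, y u = A} with hS
  have h0S : (0:ℝ) ∈ S := by
    refine ⟨⟨le_rfl, hT⟩, ?_⟩
    intro u hu
    have : u = 0 := le_antisymm hu.2 hu.1
    rw [this, hy0]
  have hbdd : BddAbove S := ⟨T, fun t ht => ht.1.2⟩
  set tstar := sSup S with htstar
  have htsI : tstar ∈ Icc (0:ℝ) T :=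
    ⟨le_csSup hbdd h0S, csSup_le ⟨0, h0S⟩ (fun t ht => ht.1.2)⟩
  have hbelow : ∀ u ∈ Ico (0:ℝ) tstar, y u = A := by
    intro u hu
    obtain ⟨x, hxS, hux⟩ := exists_lt_of_lt_csSup ⟨0, h0S⟩ hu.2
    exact hxS.2 u ⟨hu.1, hux.le⟩
  have hyts : y tstar = A := by
    rcases eq_or_lt_of_le htsI.1 with h0 | h0
    · rw [← h0, hy0]
    · by_contra hne
      have hd : 0 < |y tstar - A| := abs_pos.mpr (sub_ne_zero.mpr hne)
      obtain ⟨δ, hδ, hδ'⟩ := Metric.continuousAt_iff.mp ((hyd tstar htsI).continuousAt) _ hd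
      set u := max 0 (tstar - δ/2) with hu
      have hu1 : u < tstar := by
        apply max_lt h0
        linarith
      have hu2 : u ∈ Ico (0:ℝ) tstar := ⟨le_max_left _ _, hu1⟩
      have hdist : dist u tstar < δ := by
        rw [Real.dist_eq, abs_sub_lt_iff]
        constructor
        · linarith [hu1]
        · have : tstar - δ/2 ≤ u := le_max_right _ _
          linarith
      have := hδ' hdist
      rw [hbelow u hu2, Real.dist_eq] at this
      rw [abs_sub_comm] at this
      exact lt_irrefl _ this
  have htsS : tstar ∈ S := by
    refine ⟨htsI, ?_⟩
    intro u hu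
    rcases eq_or_lt_of_le hu.2 with h | h
    · rw [h, hyts]
    · exact hbelow u ⟨hu.1, h⟩
  -- extension step
  have hext : tstar = T := by
    by_contra hne
    have htT : tstar < T := lt_of_le_of_ne htsI.2 hne
    obtain ⟨δ, hδ, hδ'⟩ := Metric.continuousAt_iff.mp
      ((hyd tstar htsI).continuousAt) (ε/c) (div_pos hε hc)
    set e := min (tstar + δ/2) T with he
    have hte : tstar < e := lt_min (by linarith) htT
    have heT : e ∈ Icc (0:ℝ) T := ⟨htsI.1.trans hte.le, min_le_right _ _⟩
    have hIsub : Icc tstar e ⊆ Icc (0:ℝ) T := Icc_subset_Icc htsI.1 heT.2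
    have hmem : ∀ u ∈ Icc tstar e, c * y u ∈ U := by
      intro u huI
      apply hball
      rw [Metric.mem_ball, Real.dist_eq]
      have h1 : dist u tstar < δ := by
        rw [Real.dist_eq, abs_sub_lt_iff]
        have h2 : u ≤ tstar + δ/2 := huI.2.trans (min_le_left _ _)
        have h3 := huI.1
        constructor <;> linarith
      have h4 : |y u - A| < ε / c := by
        have := hδ' h1
        rwa [Real.dist_eq, hyts] at this
      have h5 : |c * y u - c * A| = c * |y u - A| := by
        rw [← mul_sub, abs_mul, abs_of_pos hc]
      rw [h5]
      calc c * |y u - A| < c * (ε/c) := mul_lt_mul_of_pos_left h4 hc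
        _ = ε := by field_simp
    have hycont : ContinuousOn (fun t => y t - A) (Icc tstar e) :=
      ContinuousOn.sub
        (fun t ht => ((hyd t (hIsub ht)).continuousAt).continuousWithinAt) continuousOn_const
    have hgron : ∀ x ∈ Icc tstar e, ‖y x - A‖ ≤ gronwallBound 0 ((L:ℝ)*c) 0 (x - tstar) := by
      apply norm_le_gronwallBound_of_norm_deriv_right_le (f := fun t => y t - A)
        (f' := fun t => f (c * y t)) hycont
      · intro x hx
        exact ((hyd x (hIsub ⟨hx.1, hx.2.le⟩)).sub_const A).hasDerivWithinAt
      · simp [hyts]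
      · intro x hx
        have hxI : x ∈ Icc tstar e := ⟨hx.1, hx.2.le⟩
        have heq : ‖f (c * y x)‖ = dist (f (c * y x)) (f (c * A)) := by
          rw [dist_eq_norm, hfA, sub_zero]
        rw [heq]
        have hle := hLip.dist_le_mul _ (hmem x hxI) _ (hball (Metric.mem_ball_self hε))
        have hdeq : dist (c * y x) (c * A) = c * ‖y x - A‖ := by
          rw [Real.dist_eq, ← mul_sub, abs_mul, abs_of_pos hc, Real.norm_eq_abs]
        rw [hdeq] at hle
        calc dist (f (c * y x)) (f (c * A)) ≤ (L:ℝ) * (c * ‖y x - A‖) := hle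
          _ = (L:ℝ) * c * ‖(fun t => y t - A) x‖ + 0 := by ring_nf
    have heS : e ∈ S := by
      refine ⟨heT, ?_⟩
      intro u hu
      rcases le_or_gt u tstar with h | h
      · exact htsS.2 u ⟨hu.1, h⟩
      · have := hgron u ⟨h.le, hu.2⟩
        rw [gronwallBound_ε0_δ0] at this
        have : ‖y u - A‖ ≤ 0 := this
        have := norm_le_zero_iff.mp this
        linarith [sub_eq_zero.mp this]
    have := le_csSup hbdd heS
    linarith [hte]
  intro t ht
  exact htsS.2 t ⟨ht.1, by rw [hext]; exact ht.2⟩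

lemma step_increasing
    {f : ℝ → ℝ} {c A : ℝ} (hc0 : 0 < c) (hA : 0 ≤ A)
    (hfmono : MonotoneOn f (Ici (0:ℝ))) (hfcont : Continuous f)
    {y : ℝ → ℝ} {T : ℝ}
    (hyd : ∀ t ∈ Icc (0:ℝ) T, HasDerivAt y (f (c * y t)) t)
    (hyA : ∀ t ∈ Icc (0:ℝ) T, A ≤ y t)
    (hfA : 0 ≤ f (c * A))
    {s Δt aa bb : ℝ} (hΔt : 0 < Δt) (hs0 : 0 ≤ s) (hsT : s + Δt ≤ T)
    (haa0 : 0 ≤ aa) (hstep : bb ≤ aa + Δt * f (c * aa))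
    (hya : aa ≤ y s) :
    bb ≤ y (s + Δt) := by
  have hycont : ContinuousOn y (Icc (0:ℝ) T) :=
    fun t ht => ((hyd t ht).continuousAt).continuousWithinAt
  have hfnn : ∀ t ∈ Icc (0:ℝ) T, 0 ≤ f (c * y t) := by
    intro t ht
    refine le_trans hfA (hfmono (mem_Ici.mpr (mul_nonneg hc0.le hA))
      (mem_Ici.mpr (mul_nonneg hc0.le (hA.trans (hyA t ht)))) ?_)
    exact mul_le_mul_of_nonneg_left (hyA t ht) hc0.le
  have hint : ∀ u v, u ∈ Icc (0:ℝ) T → v ∈ Icc (0:ℝ) T → u ≤ v →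
      (∫ t in u..v, f (c * y t)) = y v - y u := by
    intro u v hu hv huv
    have hsub : uIcc u v ⊆ Icc (0:ℝ) T := by
      rw [uIcc_of_le huv]; exact Icc_subset_Icc hu.1 hv.2
    apply integral_eq_sub_of_hasDerivAt (fun x hx => hyd x (hsub hx))
    exact (hfcont.comp_continuousOn (continuousOn_const.mul (hycont.mono hsub))).intervalIntegrable
  have hmono : ∀ u v, u ∈ Icc (0:ℝ) T → v ∈ Icc (0:ℝ) T → u ≤ v → y u ≤ y v := by
    intro u v hu hv huv
    have h1 := hint u v hu hv huv
    have h2 : 0 ≤ ∫ t in u..v, f (c * y t) := by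
      apply intervalIntegral.integral_nonneg huv
      intro t ht
      exact hfnn t ⟨hu.1.trans ht.1, ht.2.trans hv.2⟩
    linarith
  have hsI : s ∈ Icc (0:ℝ) T := ⟨hs0, by linarith⟩
  have heI : s + Δt ∈ Icc (0:ℝ) T := ⟨by linarith, hsT⟩
  have h3 : y s + Δt * f (c * y s) ≤ y (s + Δt) := by
    have h1 := hint s (s + Δt) hsI heI (by linarith)
    have h2 : (∫ t in s..(s + Δt), f (c * y s)) ≤ ∫ t in s..(s + Δt), f (c * y t) := by
      apply integral_mono_on (by linarith) intervalIntegrable_const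
      · have hsub : uIcc s (s + Δt) ⊆ Icc (0:ℝ) T := by
          rw [uIcc_of_le (by linarith : s ≤ s + Δt)]
          exact Icc_subset_Icc hsI.1 heI.2
        exact (hfcont.comp_continuousOn
          (continuousOn_const.mul (hycont.mono hsub))).intervalIntegrable
      · intro t ht
        have htI : t ∈ Icc (0:ℝ) T := ⟨hsI.1.trans ht.1, ht.2.trans heI.2⟩
        refine hfmono (mem_Ici.mpr (mul_nonneg hc0.le (hA.trans (hyA s hsI))))
          (mem_Ici.mpr (mul_nonneg hc0.le (hA.trans (hyA t htI)))) ?_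
        exact mul_le_mul_of_nonneg_left (hmono s t hsI htI ht.1) hc0.le
    rw [integral_const] at h2
    simp only [add_sub_cancel_left, smul_eq_mul] at h2
    linarith
  have h2 : aa + Δt * f (c * aa) ≤ y s + Δt * f (c * y s) := by
    have hfle : f (c * aa) ≤ f (c * y s) :=
      hfmono (mem_Ici.mpr (mul_nonneg hc0.le haa0))
        (mem_Ici.mpr (mul_nonneg hc0.le (haa0.trans hya)))
        (mul_le_mul_of_nonneg_left hya hc0.le)
    nlinarith
  linarith

/-- Discrete comparison with a convex ODE: if `f` is locally Lipschitz, increasing and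
convex on `[0,∞)`, `y` solves `y' = f(((K²+1)/2) y)`, `y(0) = a₀ ≥ 0` on `[0,T]`, and the
nonnegative sequence `(a_n)` satisfies `a_{n+1} ≤ a_n + Δt f((a_n+a_{n+1})/2)` and
`a_{n+1} ≤ K² a_n` whenever `(n+1)Δt ≤ T`, then `a_n ≤ y(nΔt)` whenever `nΔt ≤ T`. -/
theorem discrete_ode_comparison
    (f : ℝ → ℝ) (hfLip : LocallyLipschitz f)
    (hfmono : MonotoneOn f (Set.Ici (0 : ℝ)))
    (hfconv : ConvexOn ℝ (Set.Ici (0 : ℝ)) f)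
    (K : ℝ) (hK : 1 ≤ K)
    (T Δt : ℝ) (hT : 0 < T) (hΔt : 0 < Δt)
    (y : ℝ → ℝ)
    (hy : ∀ t ∈ Set.Icc (0 : ℝ) T,
      HasDerivAt y (f ((K ^ 2 + 1) / 2 * y t)) t)
    (a : ℕ → ℝ) (ha0 : a 0 = y 0) (ha0nn : 0 ≤ a 0)
    (hann : ∀ n, 0 ≤ a n)
    (hstep : ∀ n : ℕ, ((n : ℝ) + 1) * Δt ≤ T →
      a (n + 1) ≤ a n + Δt * f ((a n + a (n + 1)) / 2))
    (hgrowth : ∀ n : ℕ, ((n : ℝ) + 1) * Δt ≤ T → a (n + 1) ≤ K ^ 2 * a n) :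
    ∀ n : ℕ, (n : ℝ) * Δt ≤ T → a n ≤ y ((n : ℝ) * Δt) := by
  set c : ℝ := (K ^ 2 + 1) / 2 with hc_def
  have hc : 1 ≤ c := by rw [hc_def]; nlinarith
  have hc0 : (0:ℝ) < c := lt_of_lt_of_le one_pos hc
  have hfcont : Continuous f := hfLip.continuous
  set A := a 0 with hA_def
  have hy0A : y 0 = A := ha0.symm
  intro n
  induction n with
  | zero =>
    intro _
    simp only [Nat.cast_zero, zero_mul]
    exact le_of_eq ha0
  | succ n ih =>
    intro hn1
    have hn1' : ((n : ℝ) + 1) * Δt ≤ T := by push_cast at hn1 ⊢; linarith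
    have hnT : (n : ℝ) * Δt ≤ T := by nlinarith
    have ihn := ih hnT
    set s := (n : ℝ) * Δt with hs_def
    have hs0 : 0 ≤ s := by positivity
    have hsT : s + Δt ≤ T := by rw [hs_def]; linarith [hn1']
    have hgoal_eq : ((n + 1 : ℕ) : ℝ) * Δt = s + Δt := by push_cast; ring
    rw [hgoal_eq]
    have hstepn := hstep n hn1'
    have hgrown := hgrowth n hn1'
    set aa := a n with haa_def
    set bb := a (n + 1) with hbb_def
    have haa0 : 0 ≤ aa := hann n
    have hbb0 : 0 ≤ bb := hann (n + 1)
    have hm_le : (aa + bb) / 2 ≤ c * aa := by rw [hc_def]; nlinarith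
    have hm0 : 0 ≤ (aa + bb) / 2 := by positivity
    have hfm_le : f ((aa + bb) / 2) ≤ f (c * aa) :=
      hfmono (mem_Ici.mpr hm0) (mem_Ici.mpr (mul_nonneg hc0.le haa0)) hm_le
    rcases lt_trichotomy (f (c * A)) 0 with hsign | hsign | hsign
    · -- decreasing case
      have hyle : ∀ t ∈ Icc (0:ℝ) T, y t ≤ A := global_le hy hy0A hsign
      have hsI : s ∈ Icc (0:ℝ) T := ⟨hs0, by linarith⟩
      have hysA : y s ≤ A := hyle s hsI
      have haaA : aa ≤ A := ihn.trans hysA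
      have hneg : ∀ v ∈ Icc bb aa, f (c * v) < 0 := by
        intro v hv
        have hv0 : 0 ≤ v := hbb0.trans hv.1
        refine lt_of_le_of_lt (hfmono (mem_Ici.mpr (mul_nonneg hc0.le hv0))
          (mem_Ici.mpr (mul_nonneg hc0.le (hv0.trans (hv.2.trans haaA))))
          (mul_le_mul_of_nonneg_left (hv.2.trans haaA) hc0.le)) hsign
      have hfm_neg : f ((aa + bb) / 2) < 0 := by
        refine lt_of_le_of_lt (le_trans hfm_le (hfmono (mem_Ici.mpr (mul_nonneg hc0.le haa0))
          (mem_Ici.mpr (mul_nonneg hc0.le (haa0.trans haaA)))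
          (mul_le_mul_of_nonneg_left haaA hc0.le))) hsign
      have hba : bb < aa := by
        have := mul_neg_of_pos_of_neg hΔt hfm_neg
        linarith
      exact step_decreasing hc hfmono hfconv hfcont hΔt
        (fun t ht => hy t ⟨hs0.trans ht.1, ht.2.trans hsT⟩) hbb0 hba hstepn ihn hneg
    · -- equilibrium case: y ≡ A
      have hyeq : ∀ t ∈ Icc (0:ℝ) T, y t = A := global_eq hc0 hfLip hy hy0A hsign hT.le
      have hstep2 : bb ≤ aa + Δt * f (c * aa) := by
        have := mul_le_mul_of_nonneg_left hfm_le hΔt.le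
        linarith
      have haaA : aa ≤ A := by
        have := hyeq s ⟨hs0, by linarith⟩
        rw [this] at ihn; exact ihn
      have hfca : f (c * aa) ≤ 0 := by
        rw [← hsign]
        exact hfmono (mem_Ici.mpr (mul_nonneg hc0.le haa0))
          (mem_Ici.mpr (mul_nonneg hc0.le (haa0.trans haaA)))
          (mul_le_mul_of_nonneg_left haaA hc0.le)
      have : bb ≤ A := by
        have h4 : Δt * f (c * aa) ≤ 0 := mul_nonpos_of_nonneg_of_nonpos hΔt.le hfca
        linarith
      rw [hyeq (s + Δt) ⟨by linarith, hsT⟩]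
      exact this
    · -- increasing case
      have hyA : ∀ t ∈ Icc (0:ℝ) T, A ≤ y t := global_ge hy hy0A hsign
      have hstep2 : bb ≤ aa + Δt * f (c * aa) := by
        have := mul_le_mul_of_nonneg_left hfm_le hΔt.le
        linarith
      exact step_increasing hc0 ha0nn hfmono hfcont hy hyA hsign.le hΔt hs0 hsT haa0
        hstep2 ihn
end
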